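/- arXiv:2212.08053 — 2 statements merged into one kernel-verified Lean document; each statement's English description precedes it below -/
import Mathlib

section
/- Let ε > 0 and let f_ε : (-ε, ε) → ℝ be given by f_ε(s) = -(π/(2ε))·tan(πs/(2ε)). If u : (-ε, ε) → ℂ is differentiable, satisfies u'(s) = -f_ε(s)·u(s) for every s ∈ (-ε, ε), and is square-integrable on (-ε, ε) (∫_{-ε}^{ε} |u(s)|² ds < ∞), then u is identically zero. -/
/-!
With `c = π / (2ε)` the equation reads `u' = c tan (c s) u`, so `(u · cos (c s))' = 0` and
`u = u 0 / cos (c s)`. Then `‖u‖² = ‖u 0‖² / cos² (c s)`, whose primitive `‖u 0‖² tan (c s) / c`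
blows up at `s = ε`; square-integrability therefore forces `u 0 = 0`.
-/

open Real MeasureTheory

/-- The potential `f_ε(s) = -(π/(2ε))·tan(πs/(2ε))`. -/
noncomputable def fEps (ε s : ℝ) : ℝ := -(π / (2 * ε)) * Real.tan (π * s / (2 * ε))

open Filter Topology Set Asymptotics

lemma cos_mul_pos_of_mem_Ioo {c t : ℝ} (hc : 0 < c) (ht : t ∈ Ioo (-(π / 2 / c)) (π / 2 / c)) :
    0 < cos (c * t) := by
  have hcancel : c * (π / 2 / c) = π / 2 := mul_div_cancel₀ _ hc.ne'
  exact cos_pos_of_mem_Ioo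
    ⟨by linarith [mul_lt_mul_of_pos_left ht.1 hc], by linarith [mul_lt_mul_of_pos_left ht.2 hc]⟩

lemma hasDerivAt_tan_mul {c t : ℝ} (h : cos (c * t) ≠ 0) :
    HasDerivAt (fun t => tan (c * t)) (c / cos (c * t) ^ 2) t :=
  ((hasDerivAt_tan h).comp t ((hasDerivAt_id t).const_mul c)).congr_deriv (by ring)

lemma tendsto_tan_mul_nhdsLT {c : ℝ} (hc : 0 < c) :
    Tendsto (fun t => tan (c * t)) (𝓝[<] (π / 2 / c)) atTop := by
  refine tendsto_tan_pi_div_two.comp (tendsto_nhdsWithin_iff.2 ⟨?_, ?_⟩)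
  · have := ((continuous_const_mul c).tendsto (π / 2 / c)).mono_left
      (nhdsWithin_le_nhds (s := Iio (π / 2 / c)))
    rwa [mul_div_cancel₀ _ hc.ne'] at this
  · filter_upwards [self_mem_nhdsWithin] with t (ht : t < π / 2 / c)
    rwa [lt_div_iff₀ hc, mul_comm] at ht

lemma not_integrableOn_one_div_cos_mul_sq {c : ℝ} (hc : 0 < c) {s : Set ℝ}
    (hs : s ∈ 𝓝[<] (π / 2 / c)) : ¬IntegrableOn (fun t => 1 / cos (c * t) ^ 2) s := by
  have hcos : ∀ᶠ t in 𝓝[<] (π / 2 / c), cos (c * t) ≠ 0 := by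
    filter_upwards [Ioo_mem_nhdsLT (neg_lt_self (by positivity : 0 < π / 2 / c))] with t ht
      using (cos_mul_pos_of_mem_Ioo hc ht).ne'
  refine not_integrableOn_of_tendsto_norm_atTop_of_deriv_isBigO_filter _ hs
    (hcos.mono fun t ht => (hasDerivAt_tan_mul ht).differentiableAt)
    (tendsto_norm_atTop_atTop.comp (tendsto_tan_mul_nhdsLT hc)) ?_
  refine (EventuallyEq.isBigO ?_).trans (isBigO_const_mul_self c _ _)
  filter_upwards [hcos] with t ht
  rw [(hasDerivAt_tan_mul ht).deriv, mul_one_div]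

lemma hasDerivAt_mul_cos_mul_eq_zero {u : ℝ → ℂ} {c t : ℝ} (hcos : cos (c * t) ≠ 0)
    (hu : HasDerivAt u ((c * tan (c * t) : ℝ) * u t) t) :
    HasDerivAt (fun t => u t * cos (c * t)) 0 t := by
  have hcos' : HasDerivAt (fun t => cos (c * t)) (-sin (c * t) * c) t :=
    (hasDerivAt_cos _).comp t ((hasDerivAt_id t).const_mul c |>.congr_deriv (mul_one c))
  have key : c * tan (c * t) * cos (c * t) = c * sin (c * t) := by
    rw [mul_assoc, tan_mul_cos hcos]
  refine (hu.mul hcos'.ofReal_comp).congr_deriv ?_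
  rw [mul_right_comm, ← Complex.ofReal_mul, key]
  push_cast
  ring

lemma mul_cos_mul_eq_of_hasDerivAt {u : ℝ → ℂ} {c a b : ℝ}
    (hcos : ∀ t ∈ Ioo a b, cos (c * t) ≠ 0)
    (hu : ∀ t ∈ Ioo a b, HasDerivAt u ((c * tan (c * t) : ℝ) * u t) t) {x y : ℝ}
    (hx : x ∈ Ioo a b) (hy : y ∈ Ioo a b) : u x * cos (c * x) = u y * cos (c * y) := by
  have hderiv (t) (ht : t ∈ Ioo a b) := hasDerivAt_mul_cos_mul_eq_zero (hcos t ht) (hu t ht)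
  exact isOpen_Ioo.is_const_of_deriv_eq_zero isPreconnected_Ioo
    (fun t ht => (hderiv t ht).differentiableAt.differentiableWithinAt)
    (fun t ht => (hderiv t ht).deriv) hx hy

lemma fEps_pi_div_two_div {c : ℝ} (hc : 0 < c) (s : ℝ) :
    fEps (π / 2 / c) s = -(c * tan (c * s)) := by
  have hcoef : π / (2 * (π / 2 / c)) = c := by field_simp
  have harg : π * s / (2 * (π / 2 / c)) = c * s := by field_simp
  rw [fEps, hcoef, harg]
  ring

/-- A differentiable, square-integrable solution of `u' = -f_ε · u` on `(-ε, ε)`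
vanishes identically. -/
theorem stmt4 (ε : ℝ) (hε : 0 < ε) (u : ℝ → ℂ)
    (hu : ∀ s ∈ Set.Ioo (-ε) ε, HasDerivAt u ((-fEps ε s : ℂ) * u s) s)
    (hL2 : MeasureTheory.IntegrableOn (fun s : ℝ => ‖u s‖ ^ 2) (Set.Ioo (-ε) ε)) :
    ∀ s ∈ Set.Ioo (-ε) ε, u s = 0 := by
  obtain ⟨c, hc, rfl⟩ : ∃ c > 0, ε = π / 2 / c :=
    ⟨π / 2 / ε, by positivity, by field_simp⟩
  have hcos (t) (ht : t ∈ Ioo (-(π / 2 / c)) (π / 2 / c)) := cos_mul_pos_of_mem_Ioo hc ht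
  have hu' (t) (ht : t ∈ Ioo (-(π / 2 / c)) (π / 2 / c)) :
      HasDerivAt u ((c * tan (c * t) : ℝ) * u t) t := by
    simpa [fEps_pi_div_two_div hc] using hu t ht
  have h0 : (0 : ℝ) ∈ Ioo (-(π / 2 / c)) (π / 2 / c) := ⟨neg_lt_zero.2 hε, hε⟩
  have hsol (t) (ht : t ∈ Ioo (-(π / 2 / c)) (π / 2 / c)) : u t * cos (c * t) = u 0 := by
    simpa using mul_cos_mul_eq_of_hasDerivAt (fun t ht => (hcos t ht).ne') hu' ht h0
  intro s hs
  by_contra hus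
  have hu0 : u 0 ≠ 0 := by
    rw [← hsol s hs]
    exact mul_ne_zero hus (Complex.ofReal_ne_zero.2 (hcos s hs).ne')
  refine not_integrableOn_one_div_cos_mul_sq hc (Ioo_mem_nhdsLT (neg_lt_self hε))
    (IntegrableOn.congr_fun (hL2.div_const (‖u 0‖ ^ 2)) (fun t ht => ?_) measurableSet_Ioo)
  have hut : ‖u t‖ ≠ 0 := norm_ne_zero_iff.2 (left_ne_zero_of_mul ((hsol t ht).symm ▸ hu0))
  rw [← hsol t ht, norm_mul, Complex.norm_real, norm_of_nonneg (hcos t ht).le]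
  field_simp
end

section
/- Let ε > 0 and let f_ε : (-ε, ε) → ℝ be given by f_ε(s) = -(π/(2ε))·tan(πs/(2ε)). The ℂ-linear map sending C ∈ ℂ to the function s ↦ C·cos(πs/(2ε)) is a bijection from ℂ onto the set of differentiable, square-integrable functions u : (-ε, ε) → ℂ satisfying u'(s) = f_ε(s)·u(s) for all s ∈ (-ε, ε). In particular this solution space is a one-dimensional complex vector space. -/
/-! On `(-ε, ε)` the function `cos(πs/(2ε))` is positive and solves `u' = f_ε u`, because
`f_ε · cos(πs/(2ε)) = -(π/(2ε)) sin(πs/(2ε))`. Any other solution divided by it has derivative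
`(f u φ - u f φ) / φ² = 0`, hence is a constant multiple of it; conversely every multiple is
bounded, so square-integrable on the interval. -/

open Real MeasureTheory

theorem IsOpen.eqOn_div_mul_of_hasDerivAt_eq_mul {𝕜 𝕜' : Type*} [RCLike 𝕜]
    [NontriviallyNormedField 𝕜'] [NormedAlgebra 𝕜 𝕜'] {s : Set 𝕜} {f u φ : 𝕜 → 𝕜'}
    (hs : IsOpen s) (hs' : IsPreconnected s)
    (hu : ∀ x ∈ s, HasDerivAt u (f x * u x) x) (hφ : ∀ x ∈ s, HasDerivAt φ (f x * φ x) x)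
    (hφ₀ : ∀ x ∈ s, φ x ≠ 0) {x₀ : 𝕜} (hx₀ : x₀ ∈ s) :
    Set.EqOn u (fun x => u x₀ / φ x₀ * φ x) s := by
  have hquot : ∀ x ∈ s, HasDerivAt (u / φ) 0 x := fun x hx => by
    convert (hu x hx).div (hφ x hx) (hφ₀ x hx) using 1
    ring
  intro x hx
  have hconst : u x / φ x = u x₀ / φ x₀ :=
    hs.is_const_of_deriv_eq_zero hs' (fun y hy => (hquot y hy).differentiableAt.differentiableWithinAt)
      (fun y hy => (hquot y hy).deriv) hx hx₀
  rw [← hconst]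
  exact (div_mul_cancel₀ _ (hφ₀ x hx)).symm

theorem cos_pi_mul_div_two_mul_pos {ε s : ℝ} (hs : s ∈ Set.Ioo (-ε) ε) :
    0 < cos (π * s / (2 * ε)) := by
  have hε : 0 < ε := by linarith [hs.1, hs.2]
  apply cos_pos_of_mem_Ioo
  constructor
  · rw [lt_div_iff₀ (by positivity)]
    nlinarith [pi_pos, hs.1]
  · rw [div_lt_div_iff₀ (by positivity) two_pos]
    nlinarith [pi_pos, hs.2]

theorem fEps_mul_cos {ε s : ℝ} (hs : s ∈ Set.Ioo (-ε) ε) :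
    fEps ε s * cos (π * s / (2 * ε)) = -(π / (2 * ε)) * sin (π * s / (2 * ε)) := by
  have hcos := (cos_pi_mul_div_two_mul_pos hs).ne'
  rw [fEps, tan_eq_sin_div_cos]
  field_simp

noncomputable def cosMode (ε s : ℝ) : ℂ := cos (π * s / (2 * ε))

theorem cosMode_zero (ε : ℝ) : cosMode ε 0 = 1 := by
  simp [cosMode]

@[fun_prop]
theorem continuous_cosMode (ε : ℝ) : Continuous (cosMode ε) := by
  unfold cosMode
  fun_prop

theorem cosMode_ne_zero {ε s : ℝ} (hs : s ∈ Set.Ioo (-ε) ε) : cosMode ε s ≠ 0 :=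
  Complex.ofReal_ne_zero.mpr (cos_pi_mul_div_two_mul_pos hs).ne'

theorem hasDerivAt_cosMode (ε s : ℝ) :
    HasDerivAt (cosMode ε) (-(π / (2 * ε)) * sin (π * s / (2 * ε)) : ℝ) s := by
  have hlin : HasDerivAt (fun t : ℝ => π * t / (2 * ε)) (π / (2 * ε)) s := by
    simpa [mul_div_right_comm] using (hasDerivAt_id s).const_mul π |>.div_const (2 * ε)
  refine ((hasDerivAt_cos _).comp s hlin).ofReal_comp.congr_deriv ?_
  push_cast
  ring

theorem hasDerivAt_cosMode_eq_fEps_mul {ε s : ℝ} (hs : s ∈ Set.Ioo (-ε) ε) :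
    HasDerivAt (cosMode ε) (fEps ε s * cosMode ε s) s := by
  rw [cosMode, ← Complex.ofReal_mul, fEps_mul_cos hs]
  exact hasDerivAt_cosMode ε s

/-- The map `C ↦ (s ↦ C·cos(πs/(2ε)))` is a bijection from `ℂ` onto the set of
(restrictions to `(-ε, ε)` of) differentiable, square-integrable solutions of
`u' = f_ε · u` on `(-ε, ε)`; in particular this solution space is a
one-dimensional complex vector space. -/
theorem stmt5 (ε : ℝ) (hε : 0 < ε) :
    Set.BijOn
      (fun C : ℂ => fun s : ↥(Set.Ioo (-ε) ε) =>
        C * (Real.cos (π * (s : ℝ) / (2 * ε)) : ℂ))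
      Set.univ
      {g : ↥(Set.Ioo (-ε) ε) → ℂ | ∃ u : ℝ → ℂ,
        (∀ s ∈ Set.Ioo (-ε) ε, HasDerivAt u ((fEps ε s : ℂ) * u s) s) ∧
        MeasureTheory.IntegrableOn (fun s : ℝ => ‖u s‖ ^ 2) (Set.Ioo (-ε) ε) ∧
        ∀ s : ↥(Set.Ioo (-ε) ε), g s = u (s : ℝ)} := by
  have h0 : (0 : ℝ) ∈ Set.Ioo (-ε) ε := ⟨neg_lt_zero.mpr hε, hε⟩
  refine ⟨fun C _ => ⟨fun s => C * cosMode ε s, fun s hs => ?_, ?_, fun s => rfl⟩,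
    fun C _ C' _ h => ?_, ?_⟩
  · simpa only [mul_left_comm] using (hasDerivAt_cosMode_eq_fEps_mul hs).const_mul C
  · exact (Continuous.integrableOn_Icc (by fun_prop)).mono_set
      Set.Ioo_subset_Icc_self
  · simpa using congrFun h ⟨0, h0⟩
  · rintro g ⟨u, hu, -, hg⟩
    refine ⟨u 0, trivial, funext fun s => ?_⟩
    have hprop := isOpen_Ioo.eqOn_div_mul_of_hasDerivAt_eq_mul isPreconnected_Ioo hu
      (fun _ => hasDerivAt_cosMode_eq_fEps_mul) (fun _ => cosMode_ne_zero) h0 s.2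
    rw [hg, hprop, cosMode_zero, div_one]
    rfl
end
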